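/- Let H be a d-lightweight initialization of the subdivided graph G′, let s,t be vertices of G, let π(s,t) be the fixed shortest s–t path in G′, let z be the total weight of the edges of π(s,t) that are absent from H, and let ε′ ∈ (0,1]. Then there exists a set N of at least ε′·z/10 vertices of G′ such that every vertex of N is at distance at most ε′·W(s,t) in H from some vertex of π(s,t). -/

import Mathlib

open scoped ENNReal Classical

/-- The total weight of a walk: the sum of the weights of its edges. -/
noncomputable def walkWeight {V : Type} (G : SimpleGraph V) (w : Sym2 V → ℝ≥0∞)
    {s t : V} (p : G.Walk s t) : ℝ≥0∞ :=
  (p.edges.map w).sum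

/-- Shortest-path distance in the weighted graph `(G, w)`, equal to `⊤` if there is no path. -/
noncomputable def gdist {V : Type} (G : SimpleGraph V) (w : Sym2 V → ℝ≥0∞)
    (s t : V) : ℝ≥0∞ :=
  ⨅ p : G.Walk s t, walkWeight G w p

/-- The maximum edge weight along a walk (0 for the trivial walk). -/
noncomputable def maxEdge {V : Type} (G : SimpleGraph V) (w : Sym2 V → ℝ≥0∞)
    {s t : V} (p : G.Walk s t) : ℝ≥0∞ :=
  (p.edges.map w).foldr max 0

/-- `π` assigns to each ordered vertex pair a shortest path: a walk whose total
weight equals the shortest-path distance. -/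
def IsShortestPathScheme {V : Type} (G : SimpleGraph V) (w : Sym2 V → ℝ≥0∞)
    (π : (s t : V) → G.Walk s t) : Prop :=
  ∀ s t : V, walkWeight G w (π s t) = gdist G w s t

/-- The edge weights are positive and finite on all edges of `G`. -/
def PosWeights {V : Type} (G : SimpleGraph V) (w : Sym2 V → ℝ≥0∞) : Prop :=
  ∀ e ∈ G.edgeSet, 0 < w e ∧ w e ≠ ⊤

/-- `H` is a `d`-lightweight initialization of `(G', w)` relative to a spanning tree `T`
(the MST of the subdivided graph), witnessed by the selection `S`: starting from `T`, for
each vertex `v` the non-tree edges incident to `v` are added one by one in nondecreasing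
order of weight for as long as the total weight added for `v` remains at most `d`. -/
def IsDLightweightInit {V : Type} [Fintype V] (G' T : SimpleGraph V) (w : Sym2 V → ℝ≥0∞)
    (d : ℝ) (H : SimpleGraph V) (S : V → Finset V) : Prop :=
  (∀ v : V, ∀ u ∈ S v, G'.Adj v u ∧ ¬ T.Adj v u) ∧
  (∀ v : V, ∑ u ∈ S v, w s(v, u) ≤ ENNReal.ofReal d) ∧
  (∀ v u : V, G'.Adj v u → ¬ T.Adj v u → u ∉ S v →
      (∀ x ∈ S v, w s(v, x) ≤ w s(v, u)) ∧
      ENNReal.ofReal d < (∑ x ∈ S v, w s(v, x)) + w s(v, u)) ∧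
  (∀ a b : V, H.Adj a b ↔ T.Adj a b ∨ (G'.Adj a b ∧ (b ∈ S a ∨ a ∈ S b)))

/-- `(G', w)` models the subdivided graph of the lightweight-spanner construction: it is
connected with positive finite edge weights, every edge has weight less than the number of
vertices (edges of weight ≥ n were removed and subdividing only adds vertices), and `T` is
a spanning tree of `G'` (the subdivided MST) all of whose edges have weight at most `1`. -/
def IsSubdividedSetting {V : Type} [Fintype V] (G' T : SimpleGraph V)
    (w : Sym2 V → ℝ≥0∞) : Prop :=
  G'.Connected ∧ PosWeights G' w ∧
  (∀ e ∈ G'.edgeSet, w e < (Fintype.card V : ℝ≥0∞)) ∧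
  T ≤ G' ∧ T.Connected ∧ T.IsAcyclic ∧
  (∀ e ∈ T.edgeSet, w e ≤ 1)


/-!
Let `W` be the heaviest edge of the shortest path `P = π(s,t)` and `L ≥ z` its length. Pick
vertices `u₀, …, u_{m-1}` of `P`, `m ≥ L / 2W`, with `d(s, u_k) ∈ [2kW, 2kW + W]`; this is
possible because consecutive prefix lengths of `P` differ by at most `W`, and forces
`d(u_i, u_j) ≥ W` for `i ≠ j`. Hence the balls of radius `ε'W/4` around the `u_k` in the tree
`T ⊆ H` are pairwise disjoint and lie within `ε'W` of `P` in `H`. Each of them has at least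
`ε'W/4` vertices, because tree edges weigh at most `1` and `ε'W/4 ≤ W < n`; so together they
have at least `m · ε'W/4 ≥ ε'L/8 ≥ ε'z/10` vertices.
-/

open Finset SimpleGraph

theorem List.exists_sum_take_mem_Icc {M : Type*} [AddCommMonoid M] [LinearOrder M]
    [IsOrderedAddMonoid M] [CanonicallyOrderedAdd M] {l : List M} {W c : M}
    (hW : ∀ x ∈ l, x ≤ W) (hc : c ≤ l.sum) :
    ∃ i, (l.take i).sum ∈ Set.Icc c (c + W) := by
  have hex : ∃ i, c ≤ (l.take i).sum := ⟨l.length, by rwa [List.take_length]⟩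
  refine ⟨Nat.find hex, Nat.find_spec hex, ?_⟩
  rcases h : Nat.find hex with _ | i
  · simp
  have hi : i < l.length := by
    by_contra! hi
    exact Nat.find_min hex (show i < Nat.find hex by omega) (by rwa [List.take_of_length_le hi])
  rw [List.sum_take_succ l i hi]
  exact add_le_add (not_le.mp (Nat.find_min hex (show i < Nat.find hex by omega))).le
    (hW _ (l.getElem_mem hi))

theorem ENNReal.exists_nat_minimal_le_mul {a b : ℝ≥0∞} (ha : a ≠ ⊤) (hb : b ≠ 0) :
    ∃ m : ℕ, a ≤ m * b ∧ ∀ k < m, (k : ℝ≥0∞) * b ≤ a := by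
  have hex : ∃ n : ℕ, a ≤ n * b := (ENNReal.exists_nat_mul_gt hb ha).imp fun _ h => h.le
  exact ⟨Nat.find hex, Nat.find_spec hex, fun k hk => (not_le.mp (Nat.find_min hex hk)).le⟩

theorem ENNReal.mul_div_four_add_self_lt {ε W : ℝ≥0∞} (hε : ε ≤ 1) (hW0 : W ≠ 0)
    (hW : W ≠ ⊤) : ε * W / 4 + ε * W / 4 < W :=
  calc ε * W / 4 + ε * W / 4 ≤ W / 4 + W / 4 := by gcongr <;> exact mul_le_of_le_one_left' hε
    _ = W / 2 := by
      rw [ENNReal.div_add_div_same, ← two_mul, show (4 : ℝ≥0∞) = 2 * 2 by norm_num,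
        ENNReal.mul_div_mul_left _ _ two_ne_zero ENNReal.ofNat_ne_top]
    _ < W := ENNReal.half_lt_self hW0 hW

theorem ENNReal.mul_div_ten_le {ε z W : ℝ≥0∞} {m : ℕ} (hz : z ≤ m * (W + W)) :
    ε * z / 10 ≤ m * (ε * W / 4) := by
  have h : (2 : ℝ≥0∞) * 10⁻¹ ≤ 4⁻¹ := by
    rw [ENNReal.le_inv_iff_mul_le, mul_comm, ← mul_assoc, ← div_eq_mul_inv,
      ENNReal.div_le_iff_le_mul] <;> norm_num
  calc ε * z / 10 ≤ ε * (m * (W + W)) / 10 := by gcongr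
    _ = m * (ε * W) * (2 * 10⁻¹) := by rw [div_eq_mul_inv]; ring
    _ ≤ m * (ε * W) * 4⁻¹ := by gcongr
    _ = m * (ε * W / 4) := by rw [div_eq_mul_inv]; ring

section WeightedDistance

variable {V : Type} {G : SimpleGraph V} {w : Sym2 V → ℝ≥0∞}

theorem le_maxEdge {s t : V} {p : G.Walk s t} {x : ℝ≥0∞} (hx : x ∈ p.edges.map w) :
    x ≤ maxEdge G w p :=
  List.le_max_of_le hx le_rfl

theorem maxEdge_le {s t : V} {p : G.Walk s t} {c : ℝ≥0∞} (h : ∀ e ∈ p.edges, w e ≤ c) :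
    maxEdge G w p ≤ c :=
  List.max_le_of_forall_le _ _ <| by simpa using h

theorem walkWeight_append {s u t : V} (p : G.Walk s u) (q : G.Walk u t) :
    walkWeight G w (p.append q) = walkWeight G w p + walkWeight G w q := by
  simp [walkWeight]

theorem walkWeight_take {s t : V} (p : G.Walk s t) (i : ℕ) :
    walkWeight G w (p.take i) = ((p.edges.map w).take i).sum := by
  simp [walkWeight, Walk.edges_take, List.map_take]

theorem walkWeight_drop {s t : V} (p : G.Walk s t) (i : ℕ) :
    walkWeight G w (p.drop i) = ((p.edges.map w).drop i).sum := by
  simp [walkWeight, Walk.edges_drop, List.map_drop]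

theorem walkWeight_le_length {s t : V} (p : G.Walk s t) (h1 : ∀ e ∈ p.edges, w e ≤ 1) :
    walkWeight G w p ≤ p.length := by
  simpa [walkWeight] using List.sum_le_card_nsmul (p.edges.map w) 1 (by simpa using h1)

theorem walkWeight_le_length_mul_maxEdge {s t : V} (p : G.Walk s t) :
    walkWeight G w p ≤ p.length * maxEdge G w p := by
  simpa [walkWeight] using
    List.sum_le_card_nsmul (p.edges.map w) (maxEdge G w p) fun _ => le_maxEdge

theorem gdist_le_walkWeight {s t : V} (p : G.Walk s t) : gdist G w s t ≤ walkWeight G w p :=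
  iInf_le _ p

theorem gdist_triangle (u x v : V) : gdist G w u v ≤ gdist G w u x + gdist G w x v := by
  simp only [gdist, ENNReal.iInf_add, ENNReal.add_iInf]
  exact le_iInf₂ fun q p => (gdist_le_walkWeight (p.append q)).trans (walkWeight_append p q).le

theorem gdist_comm (u v : V) : gdist G w u v = gdist G w v u := by
  have key (a b : V) : gdist G w a b ≤ gdist G w b a :=
    le_iInf fun q => (gdist_le_walkWeight q.reverse).trans (by simp [walkWeight, List.sum_reverse])
  exact le_antisymm (key u v) (key v u)

theorem gdist_anti {G₁ G₂ : SimpleGraph V} (h : G₁ ≤ G₂) (u v : V) :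
    gdist G₂ w u v ≤ gdist G₁ w u v :=
  le_iInf fun p => (gdist_le_walkWeight (p.mapLe h)).trans (by simp [walkWeight])

theorem gdist_getVert_eq_sum_take {s t : V} {p : G.Walk s t}
    (hp : walkWeight G w p = gdist G w s t) (hfin : walkWeight G w p ≠ ⊤) (i : ℕ) :
    gdist G w s (p.getVert i) = ((p.edges.map w).take i).sum := by
  have hsplit :
      ((p.edges.map w).take i).sum + ((p.edges.map w).drop i).sum = walkWeight G w p := by
    rw [← List.sum_append, List.take_append_drop, walkWeight]
  have hdrop : ((p.edges.map w).drop i).sum ≠ ⊤ :=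
    ne_top_of_le_ne_top hfin (hsplit ▸ le_add_self)
  refine le_antisymm (walkWeight_take p i ▸ gdist_le_walkWeight _) ?_
  refine (ENNReal.add_le_add_iff_right hdrop).mp ?_
  calc _ = gdist G w s t := hsplit.trans hp
    _ ≤ gdist G w s (p.getVert i) + gdist G w (p.getVert i) t := gdist_triangle _ _ _
    _ ≤ _ := by gcongr; exact walkWeight_drop p i ▸ gdist_le_walkWeight _

theorem exists_mem_support_gdist_mem_Icc {s t : V} {p : G.Walk s t}
    (hp : walkWeight G w p = gdist G w s t) (hfin : walkWeight G w p ≠ ⊤) {c : ℝ≥0∞}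
    (hc : c ≤ walkWeight G w p) :
    ∃ v ∈ p.support, gdist G w s v ∈ Set.Icc c (c + maxEdge G w p) := by
  obtain ⟨i, hi⟩ := List.exists_sum_take_mem_Icc (fun _ => le_maxEdge) hc
  exact ⟨p.getVert i, p.getVert_mem_support i, gdist_getVert_eq_sum_take hp hfin i ▸ hi⟩

theorem exists_support_vertices_at_levels {s t : V} {p : G.Walk s t}
    (hp : walkWeight G w p = gdist G w s t) (hfin : walkWeight G w p ≠ ⊤) {D : ℝ≥0∞}
    (hD : D ≠ 0) :
    ∃ (m : ℕ) (u : ℕ → V), walkWeight G w p ≤ m * D ∧ ∀ k < m,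
      u k ∈ p.support ∧ gdist G w s (u k) ∈ Set.Icc (k * D) (k * D + maxEdge G w p) := by
  obtain ⟨m, hLm, hm⟩ := ENNReal.exists_nat_minimal_le_mul hfin hD
  have : Nonempty V := ⟨s⟩
  choose! u hu using fun k (hk : k < m) => exists_mem_support_gdist_mem_Icc hp hfin (hm k hk)
  exact ⟨m, u, hLm, hu⟩

theorem le_gdist_of_levels {s a b : V} {W : ℝ≥0∞} (hW : W ≠ ⊤) {i j : ℕ} (hij : i < j)
    (ha : gdist G w s a ≤ i * (W + W) + W) (hb : j * (W + W) ≤ gdist G w s b) :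
    W ≤ gdist G w a b := by
  by_contra! hab
  have hfin : (i : ℝ≥0∞) * (W + W) + W ≠ ⊤ := by finiteness
  have hj : ((i : ℝ≥0∞) + 1) * (W + W) ≤ j * (W + W) := by gcongr; exact_mod_cast hij
  refine (hb.trans (gdist_triangle s a b)).not_gt ?_
  calc gdist G w s a + gdist G w a b ≤ i * (W + W) + W + gdist G w a b := by gcongr
    _ < i * (W + W) + W + W := ENNReal.add_lt_add_left hfin hab
    _ = (i + 1) * (W + W) := by ring
    _ ≤ j * (W + W) := hj

theorem pairwise_add_lt_gdist_of_levels {T : SimpleGraph V} (hTG : T ≤ G) {s : V}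
    {W ρ : ℝ≥0∞} (hW : W ≠ ⊤) (hρ : ρ + ρ < W) {m : ℕ} {u : ℕ → V}
    (hu : ∀ k < m, gdist G w s (u k) ∈ Set.Icc (k * (W + W)) (k * (W + W) + W)) :
    ((range m : Finset ℕ) : Set ℕ).Pairwise fun i j => ρ + ρ < gdist T w (u i) (u j) := by
  have hlt : ∀ i j, i < j → j < m → ρ + ρ < gdist T w (u i) (u j) := fun i j hij hj =>
    hρ.trans_le <|
      (le_gdist_of_levels hW hij (hu i (hij.trans hj)).2 (hu j hj).1).trans (gdist_anti hTG _ _)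
  intro i hi j hj hij
  simp only [coe_range, Set.mem_Iio] at hi hj
  rcases hij.lt_or_gt with h | h
  · exact hlt i j h hj
  · exact gdist_comm (u j) (u i) ▸ hlt j i h hi

end WeightedDistance

section Balls

variable {V : Type} [Fintype V] {G : SimpleGraph V} {w : Sym2 V → ℝ≥0∞}

noncomputable def gball (G : SimpleGraph V) (w : Sym2 V → ℝ≥0∞) (u : V) (ρ : ℝ≥0∞) :
    Finset V :=
  univ.filter fun x => gdist G w u x ≤ ρ

theorem mem_gball {u x : V} {ρ : ℝ≥0∞} : x ∈ gball G w u ρ ↔ gdist G w u x ≤ ρ := by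
  simp [gball]

theorem gdist_le_of_mem_gball {H : SimpleGraph V} (hGH : G ≤ H) {u x : V} {ρ : ℝ≥0∞}
    (hx : x ∈ gball G w u ρ) : gdist H w x u ≤ ρ :=
  (gdist_anti hGH x u).trans (gdist_comm (G := G) x u ▸ mem_gball.mp hx)

theorem disjoint_gball_of_add_lt_gdist {u v : V} {ρ : ℝ≥0∞} (h : ρ + ρ < gdist G w u v) :
    Disjoint (gball G w u ρ) (gball G w v ρ) := by
  refine disjoint_left.mpr fun x hu hv => h.not_ge ?_
  calc gdist G w u v ≤ gdist G w u x + gdist G w v x := gdist_comm v x ▸ gdist_triangle u x v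
    _ ≤ ρ + ρ := add_le_add (mem_gball.mp hu) (mem_gball.mp hv)

/-- Either the ball is everything, or it contains the first `⌊ρ⌋ + 1` vertices of a path from
`u` to a vertex outside it. -/
theorem min_le_card_gball (hG : G.Connected) (h1 : ∀ e ∈ G.edgeSet, w e ≤ 1) (u : V)
    (ρ : ℝ≥0∞) : min ρ (Fintype.card V) ≤ #(gball G w u ρ) := by
  by_cases hall : ∀ v, gdist G w u v ≤ ρ
  · have : gball G w u ρ = univ := by ext; simp [gball, hall]
    rw [this, card_univ]
    exact min_le_right _ _
  obtain ⟨v, hv⟩ : ∃ v, ρ < gdist G w u v := by simpa using hall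
  obtain ⟨p, hp⟩ := (hG.preconnected u v).exists_isPath
  have hρ : ρ ≠ ⊤ := hv.ne_top
  set n := ⌊ρ.toNNReal⌋₊
  have hnρ : (n : ℝ≥0∞) ≤ ρ := by
    rw [← ENNReal.coe_toNNReal hρ, ← ENNReal.coe_natCast, ENNReal.coe_le_coe]
    exact Nat.floor_le ρ.toNNReal.coe_nonneg
  have hρn : ρ ≤ n + 1 := by
    rw [← ENNReal.coe_toNNReal hρ]
    exact_mod_cast (Nat.lt_floor_add_one _).le
  have hedges : ∀ e ∈ p.edges, w e ≤ 1 := fun e he => h1 e (p.edges_subset_edgeSet he)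
  have hnlen : n ≤ p.length := by
    have := hnρ.trans_lt <| hv.trans_le <|
      (gdist_le_walkWeight p).trans (walkWeight_le_length p hedges)
    exact_mod_cast this.le
  have hball : ∀ i ≤ n, p.getVert i ∈ gball G w u ρ := fun i hi => mem_gball.mpr <|
    calc gdist G w u (p.getVert i) ≤ (p.take i).length :=
          (gdist_le_walkWeight _).trans <| walkWeight_le_length _ fun e he =>
            hedges e (by rw [Walk.edges_take] at he; exact List.mem_of_mem_take he)
      _ ≤ n := by rw [Walk.take_length]; exact_mod_cast (min_le_left _ _).trans hi
      _ ≤ ρ := hnρ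
  have hcard : n + 1 ≤ #(gball G w u ρ) := by
    rw [← card_range (n + 1)]
    refine card_le_card_of_injOn p.getVert (fun i hi => hball i ?_) ?_
    · simpa [Nat.lt_succ_iff] using hi
    · exact hp.getVert_injOn.mono fun i hi => by simp at hi; simp; omega
  calc min ρ (Fintype.card V) ≤ ρ := min_le_left _ _
    _ ≤ n + 1 := hρn
    _ ≤ #(gball G w u ρ) := by exact_mod_cast hcard

theorem card_mul_le_card_biUnion_gball {ι : Type*} (hG : G.Connected)
    (h1 : ∀ e ∈ G.edgeSet, w e ≤ 1) {ρ : ℝ≥0∞} (hρ : ρ ≤ Fintype.card V) {K : Finset ι}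
    (u : ι → V) (hsep : (K : Set ι).Pairwise fun i j => ρ + ρ < gdist G w (u i) (u j)) :
    #K * ρ ≤ #(K.biUnion fun i => gball G w (u i) ρ) := by
  rw [card_biUnion fun i hi j hj hij => disjoint_gball_of_add_lt_gdist (hsep hi hj hij),
    Nat.cast_sum, ← nsmul_eq_mul, ← sum_const]
  refine sum_le_sum fun i _ => ?_
  simpa [min_eq_left hρ] using min_le_card_gball hG h1 (u i) ρ

end Balls

theorem lightweight_init_path_neighborhood_general
    (V : Type) [Fintype V] (G' T : SimpleGraph V) (w : Sym2 V → ℝ≥0∞)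
    (hsetting : IsSubdividedSetting G' T w)
    (π : (s t : V) → G'.Walk s t) (hπ : IsShortestPathScheme G' w π)
    (d : ℝ)
    (H : SimpleGraph V) (S : V → Finset V) (hinit : IsDLightweightInit G' T w d H S)
    (s t : V) (z : ℝ≥0∞)
    (hz : (((π s t).edges.filter (fun e => e ∉ H.edgeSet)).map w).sum = z)
    (ε' : ℝ) (hε'1 : ε' ≤ 1) :
    ∃ N : Finset V, ENNReal.ofReal ε' * z / 10 ≤ (N.card : ℝ≥0∞) ∧
      ∀ x ∈ N, ∃ y ∈ (π s t).support,
        gdist H w x y ≤ ENNReal.ofReal ε' * maxEdge G' w (π s t) := by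
  obtain ⟨-, -, hlt, hTG, hTconn, -, hT1⟩ := hsetting
  have hTH : T ≤ H := fun a b h => (hinit.2.2.2 a b).mpr (.inl h)
  set P := π s t
  set W := maxEdge G' w P
  set ε := ENNReal.ofReal ε'
  have hWn : W ≤ Fintype.card V := maxEdge_le fun e he => (hlt e (P.edges_subset_edgeSet he)).le
  have hWtop : W ≠ ⊤ := ne_top_of_le_ne_top (ENNReal.natCast_ne_top _) hWn
  have hLW := walkWeight_le_length_mul_maxEdge (w := w) P
  have hzL : z ≤ walkWeight G' w P :=
    hz ▸ (List.filter_sublist.map w).sum_le_sum fun _ _ => zero_le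
  rcases eq_or_ne W 0 with hW0 | hW0
  · refine ⟨∅, ?_, by simp⟩
    simp [nonpos_iff_eq_zero.mp (hzL.trans (hLW.trans (by simp [W, hW0])))]
  have hLfin : walkWeight G' w P ≠ ⊤ := ne_top_of_le_ne_top (by finiteness) hLW
  have hε : ε ≤ 1 := ENNReal.ofReal_le_one.mpr hε'1
  set ρ := ε * W / 4
  have hρε : ρ ≤ ε * W := ENNReal.div_le_of_le_mul (le_mul_of_one_le_right' (by norm_num))
  have hρn : ρ ≤ Fintype.card V := hρε.trans <| (mul_le_of_le_one_left' hε).trans hWn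
  obtain ⟨m, u, hLm, hu⟩ :=
    exists_support_vertices_at_levels (hπ s t) hLfin (D := W + W) (by simpa using hW0)
  have hsep := pairwise_add_lt_gdist_of_levels (ρ := ρ) hTG hWtop
    (ENNReal.mul_div_four_add_self_lt hε hW0 hWtop) fun k hk => (hu k hk).2
  refine ⟨(range m).biUnion fun k => gball T w (u k) ρ, ?_, fun x hx => ?_⟩
  · calc ε * z / 10 ≤ m * ρ := ENNReal.mul_div_ten_le (hzL.trans hLm)
      _ ≤ _ := by simpa using card_mul_le_card_biUnion_gball hTconn hT1 hρn u hsep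
  obtain ⟨k, hk, hxk⟩ := mem_biUnion.mp hx
  exact ⟨u k, (hu k (mem_range.mp hk)).1, (gdist_le_of_mem_gball hTH hxk).trans hρε⟩

/-- Let `H` be a `d`-lightweight initialization of the subdivided graph
`G'`, let `π(s,t)` be the fixed shortest `s`–`t` path, let `z` be the total weight of the
edges of `π(s,t)` absent from `H`, and let `ε' ∈ (0,1]`. Then there is a set `N` of at least
`ε'·z/10` vertices, each at distance at most `ε'·W(s,t)` in `H` from some vertex of
`π(s,t)`. -/
theorem lightweight_init_path_neighborhood
    (V : Type) [Fintype V] (G' T : SimpleGraph V) (w : Sym2 V → ℝ≥0∞)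
    (hsetting : IsSubdividedSetting G' T w)
    (π : (s t : V) → G'.Walk s t) (hπ : IsShortestPathScheme G' w π)
    (d : ℝ) (hd : 0 ≤ d)
    (H : SimpleGraph V) (S : V → Finset V) (hinit : IsDLightweightInit G' T w d H S)
    (s t : V) (z : ℝ≥0∞)
    (hz : (((π s t).edges.filter (fun e => e ∉ H.edgeSet)).map w).sum = z)
    (ε' : ℝ) (hε'0 : 0 < ε') (hε'1 : ε' ≤ 1) :
    ∃ N : Finset V, ENNReal.ofReal ε' * z / 10 ≤ (N.card : ℝ≥0∞) ∧
      ∀ x ∈ N, ∃ y ∈ (π s t).support,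
        gdist H w x y ≤ ENNReal.ofReal ε' * maxEdge G' w (π s t) :=
  lightweight_init_path_neighborhood_general V G' T w hsetting π hπ d H S hinit s t z hz ε' hε'1
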